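/- Fix 0 ≤ s ≤ t ≤ 1 and m ≥ 1. The symmetrization, in the m variables (t_1,…,t_m) ∈ [0,1]^m, of the function f(t_1,…,t_m) = 1_{[s,t]}(t_1)·∏_{i=2}^{m} 1_{[t_1,t]^c}(t_i) equals (1/m)·1_{A_m} almost everywhere with respect to Lebesgue measure on [0,1]^m, where A_m = ⋃_{i=1}^{m} {(t_1,…,t_m) ∈ [0,1]^m : t_i ∈ [s,t]} and the symmetrization of f is (1/m!)·Σ_{σ ∈ S_m} f(t_{σ(1)},…,t_{σ(m)}). -/

import Mathlib

/-!
The summand indexed by `σ` depends only on `j = σ 0`: it is the indicator that `x j ∈ [s, t]` while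
no other coordinate lies in `[x j, t]`. For distinct coordinates in `[0, 1]` this says that `x j` is
the largest coordinate not exceeding `t`, and that it is at least `s`; so exactly one `j` contributes
when some coordinate lies in `[s, t]`, and none otherwise. Each `j` equals `σ 0` for `(m - 1)!`
permutations, and points with two equal coordinates form a Lebesgue-null set.
-/

open MeasureTheory Set Finset

section Diagonal

variable {ι : Type*} [Fintype ι] (μ : Measure (ι → ℝ)) [μ.IsAddHaarMeasure]

theorem addHaar_setOf_apply_eq_apply {i j : ι} (hij : i ≠ j) : μ {x | x i = x j} = 0 := by
  classical
  let L : (ι → ℝ) →ₗ[ℝ] ℝ := LinearMap.proj (R := ℝ) (φ := fun _ : ι => ℝ) i - LinearMap.proj j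
  have hker : {x : ι → ℝ | x i = x j} = LinearMap.ker L := by
    ext x
    simp [L, sub_eq_zero]
  rw [hker]
  refine Measure.addHaar_submodule μ _ fun h => ?_
  have := congrArg (· (Pi.single i 1)) (LinearMap.ker_eq_top.mp h)
  simp [L, hij] at this

theorem ae_injective : ∀ᵐ x ∂μ, Function.Injective x := by
  have hne : ∀ᵐ x ∂μ, ∀ i j : ι, i ≠ j → x i ≠ x j := by
    refine ae_all_iff.mpr fun i => ae_all_iff.mpr fun j => ?_
    by_cases hij : i = j
    · exact Filter.Eventually.of_forall fun _ h => absurd hij h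
    · refine measure_mono_null (fun x hx => ?_) (addHaar_setOf_apply_eq_apply μ hij)
      simpa [hij] using hx
  filter_upwards [hne] with x hx i j
  exact not_imp_not.mp (hx i j)

end Diagonal

theorem Equiv.Perm.sum_apply_zero {M : Type*} [AddCommMonoid M] {n : ℕ} (g : Fin (n + 1) → M) :
    ∑ σ : Equiv.Perm (Fin (n + 1)), g (σ 0) = n.factorial • ∑ j, g j := by
  rw [← Equiv.sum_comp Equiv.Perm.decomposeFin.symm, Fintype.sum_prod_type]
  simp only [Equiv.Perm.decomposeFin_symm_apply_zero, Finset.sum_const, Finset.card_univ,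
    Fintype.card_perm, Fintype.card_fin, Finset.smul_sum]

section Kernel

variable {ι : Type*} [Fintype ι] [DecidableEq ι] (s t : ℝ)

noncomputable def clarkOconeTerm (x : ι → ℝ) (j : ι) : ℝ :=
  (Icc s t).indicator (fun _ => (1 : ℝ)) (x j) *
    ∏ i ∈ univ.erase j, (Icc (0 : ℝ) 1 \ Icc (x j) t).indicator (fun _ => (1 : ℝ)) (x i)

variable {s t}

theorem clarkOconeTerm_comp_perm (x : ι → ℝ) (σ : Equiv.Perm ι) (j : ι) :
    clarkOconeTerm s t (fun i => x (σ i)) j = clarkOconeTerm s t x (σ j) := by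
  rw [clarkOconeTerm, clarkOconeTerm]
  congr 1
  exact Finset.prod_equiv σ (by simp) fun _ _ => rfl

theorem clarkOconeTerm_of_notMem {x : ι → ℝ} {j : ι} (hj : x j ∉ Icc s t) :
    clarkOconeTerm s t x j = 0 := by
  rw [clarkOconeTerm, indicator_of_notMem hj, zero_mul]

theorem clarkOconeTerm_of_mem_Icc_apply {x : ι → ℝ} {i j : ι} (hij : i ≠ j)
    (hi : x i ∈ Icc (x j) t) : clarkOconeTerm s t x j = 0 := by
  rw [clarkOconeTerm, Finset.prod_eq_zero (Finset.mem_erase.mpr ⟨hij, Finset.mem_univ i⟩) ?_,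
    mul_zero]
  exact indicator_of_notMem (fun h => h.2 hi) _

theorem clarkOconeTerm_of_isGreatest {x : ι → ℝ} {j : ι} (hx01 : ∀ i, x i ∈ Icc (0 : ℝ) 1)
    (hj : x j ∈ Icc s t) (hmax : ∀ i ≠ j, x i ≤ t → x i < x j) :
    clarkOconeTerm s t x j = 1 := by
  rw [clarkOconeTerm, indicator_of_mem hj, one_mul]
  refine Finset.prod_eq_one fun i hi => indicator_of_mem ?_ _
  exact ⟨hx01 i, fun hi' => (hmax i (Finset.ne_of_mem_erase hi) hi'.2).not_ge hi'.1⟩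

theorem sum_clarkOconeTerm {x : ι → ℝ} (hx : Function.Injective x)
    (hx01 : ∀ i, x i ∈ Icc (0 : ℝ) 1) :
    ∑ j, clarkOconeTerm s t x j =
      (⋃ i, {y : ι → ℝ | y i ∈ Icc s t}).indicator (fun _ => (1 : ℝ)) x := by
  by_cases hA : ∃ i, x i ∈ Icc s t
  · obtain ⟨i₀, hi₀⟩ := hA
    obtain ⟨j₀, hj₀t, hj₀max⟩ :=
      Finset.exists_max_image {i | x i ≤ t} x ⟨i₀, Finset.mem_filter.mpr ⟨mem_univ _, hi₀.2⟩⟩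
    simp only [Finset.mem_filter, Finset.mem_univ, true_and] at hj₀t hj₀max
    rw [indicator_of_mem (mem_iUnion.mpr ⟨i₀, hi₀⟩), Finset.sum_eq_single_of_mem j₀ (mem_univ _)]
    · refine clarkOconeTerm_of_isGreatest hx01 ⟨hi₀.1.trans (hj₀max i₀ hi₀.2), hj₀t⟩
        fun i hij hit => (hj₀max i hit).lt_of_ne (hx.ne hij)
    · intro j _ hj
      by_cases hjst : x j ∈ Icc s t
      · exact clarkOconeTerm_of_mem_Icc_apply (Ne.symm hj) ⟨hj₀max j hjst.2, hj₀t⟩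
      · exact clarkOconeTerm_of_notMem hjst
  · rw [indicator_of_notMem (by simpa using hA)]
    exact Finset.sum_eq_zero fun j _ => clarkOconeTerm_of_notMem fun h => hA ⟨j, h⟩

end Kernel

theorem symmetrization_of_clark_ocone_kernel_general
    (s t : ℝ)
    (m : ℕ) (hm : 1 ≤ m)
    (f : (Fin m → ℝ) → ℝ)
    (hf : ∀ x : Fin m → ℝ,
      f x = Set.indicator (Set.Icc s t) (fun _ => (1:ℝ)) (x ⟨0, hm⟩) *
        ∏ i ∈ Finset.univ.erase (⟨0, hm⟩ : Fin m),
          Set.indicator (Set.Icc (0:ℝ) 1 \ Set.Icc (x ⟨0, hm⟩) t) (fun _ => (1:ℝ)) (x i))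
    (Am : Set (Fin m → ℝ))
    (hAm : Am = ⋃ i : Fin m, {x : Fin m → ℝ | x i ∈ Set.Icc s t}) :
    ∀ᵐ x ∂((volume : Measure (Fin m → ℝ)).restrict (Set.univ.pi fun _ => Set.Icc (0:ℝ) 1)),
      (1 / (m.factorial : ℝ)) * ∑ σ : Equiv.Perm (Fin m), f (fun i => x (σ i))
        = (1 / (m : ℝ)) * Set.indicator Am (fun _ => (1:ℝ)) x := by
  obtain ⟨n, rfl⟩ : ∃ n, m = n + 1 := ⟨m - 1, by omega⟩
  have hfσ (x : Fin (n + 1) → ℝ) (σ : Equiv.Perm (Fin (n + 1))) :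
      f (fun i => x (σ i)) = clarkOconeTerm s t x (σ 0) := by
    rw [hf, ← clarkOconeTerm_comp_perm]
    rfl
  filter_upwards [ae_restrict_of_ae (ae_injective (volume : Measure (Fin (n + 1) → ℝ))),
    ae_restrict_mem (MeasurableSet.univ_pi fun _ => measurableSet_Icc)] with x hx hx01
  rw [Finset.sum_congr rfl fun σ _ => hfσ x σ, Equiv.Perm.sum_apply_zero,
    sum_clarkOconeTerm hx fun i => hx01 i (mem_univ i), hAm, nsmul_eq_mul, Nat.factorial_succ]
  push_cast
  field_simp

theorem symmetrization_of_clark_ocone_kernel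
    (s t : ℝ) (hs : 0 ≤ s) (hst : s ≤ t) (ht : t ≤ 1)
    (m : ℕ) (hm : 1 ≤ m)
    (f : (Fin m → ℝ) → ℝ)
    (hf : ∀ x : Fin m → ℝ,
      f x = Set.indicator (Set.Icc s t) (fun _ => (1:ℝ)) (x ⟨0, hm⟩) *
        ∏ i ∈ Finset.univ.erase (⟨0, hm⟩ : Fin m),
          Set.indicator (Set.Icc (0:ℝ) 1 \ Set.Icc (x ⟨0, hm⟩) t) (fun _ => (1:ℝ)) (x i))
    (Am : Set (Fin m → ℝ))
    (hAm : Am = ⋃ i : Fin m, {x : Fin m → ℝ | x i ∈ Set.Icc s t}) :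
    ∀ᵐ x ∂((volume : Measure (Fin m → ℝ)).restrict (Set.univ.pi fun _ => Set.Icc (0:ℝ) 1)),
      (1 / (m.factorial : ℝ)) * ∑ σ : Equiv.Perm (Fin m), f (fun i => x (σ i))
        = (1 / (m : ℝ)) * Set.indicator Am (fun _ => (1:ℝ)) x :=
  symmetrization_of_clark_ocone_kernel_general s t m hm f hf Am hAm
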